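/- arXiv:2104.00803 — 7 statements merged into one kernel-verified Lean document; each statement's English description precedes it below -/
import Mathlib

section
/- Let e* ∈ E. There exist an assignment Π containing e* with w_{e*} = max_{e∈Π} w_e and an exclusive set S for e* with w_{e*} ≤ w_e for every e ∈ S, if and only if e* is a bottleneck edge. Moreover, whenever an assignment Π containing e* satisfies w_{e*} = max_{e∈Π} w_e and some exclusive set S for e* satisfies w_{e*} ≤ w_e for every e ∈ S, the assignment Π is a bottleneck assignment. -/
/-!
Setting: a finite bipartite graph with vertex sets `V₁`, `V₂` (modelled as two
disjoint types), edge set `E ⊆ V₁ × V₂` and edge weights `w : V₁ × V₂ → ℝ`.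
-/

/-- `M` is an assignment on the edge set `E`: every vertex of `V₂` is incident
to exactly one edge of `M` and every vertex of `V₁` to at most one. -/
def IsAssignment {V₁ V₂ : Type*} (E M : Finset (V₁ × V₂)) : Prop :=
  M ⊆ E ∧ (∀ j : V₂, ∃! e, e ∈ M ∧ e.2 = j) ∧
    ∀ e ∈ M, ∀ e' ∈ M, e.1 = e'.1 → e = e'

/-- `e` is a maximum-weight edge of `M`. -/
def IsMaxEdge {V₁ V₂ : Type*} (w : V₁ × V₂ → ℝ) (M : Finset (V₁ × V₂))
    (e : V₁ × V₂) : Prop :=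
  e ∈ M ∧ ∀ e' ∈ M, w e' ≤ w e

/-- `M` is a bottleneck assignment: it is an assignment whose maximum edge
weight is at most the maximum edge weight of any other assignment. -/
def IsBottleneck {V₁ V₂ : Type*} (w : V₁ × V₂ → ℝ) (E M : Finset (V₁ × V₂)) : Prop :=
  IsAssignment E M ∧
    ∀ M', IsAssignment E M' → ∀ e ∈ M, ∃ e' ∈ M', w e ≤ w e'

/-- `e` is a bottleneck edge: a maximum-weight edge of some bottleneck assignment. -/
def IsBottleneckEdge {V₁ V₂ : Type*} (w : V₁ × V₂ → ℝ) (E : Finset (V₁ × V₂))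
    (e : V₁ × V₂) : Prop :=
  ∃ M, IsBottleneck w E M ∧ IsMaxEdge w M e

/-- `S` is an exclusive set for the edge `estar`. -/
def IsExclusive {V₁ V₂ : Type*} (E : Finset (V₁ × V₂)) (estar : V₁ × V₂)
    (S : Finset (V₁ × V₂)) : Prop :=
  S ⊆ E ∧ estar ∉ S ∧ ∀ M, IsAssignment E M → estar ∈ M ∨ ∃ e ∈ S, e ∈ M

/-!
Both directions rest on one observation: "every assignment has an edge at least as
heavy as `e*`". An exclusive set of edges no lighter than `e*` gives this (every
assignment meets `e*` or the set), so an assignment whose heaviest edge is `e*` is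
bottleneck. Conversely, if a bottleneck assignment contains `e*`, the observation holds,
and it says exactly that the edges of `E` other than `e*` that are no lighter than `e*`
form an exclusive set.
-/

section

variable {V₁ V₂ : Type*} {E M S : Finset (V₁ × V₂)} {w : V₁ × V₂ → ℝ} {estar : V₁ × V₂}

theorem IsExclusive.isBottleneck (hS : IsExclusive E estar S) (hwS : ∀ e ∈ S, w estar ≤ w e)
    (hM : IsAssignment E M) (hmax : IsMaxEdge w M estar) : IsBottleneck w E M := by
  refine ⟨hM, fun M' hM' e heM => ?_⟩
  rcases hS.2.2 M' hM' with hestar | ⟨f, hfS, hfM⟩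
  · exact ⟨estar, hestar, hmax.2 e heM⟩
  · exact ⟨f, hfM, (hmax.2 e heM).trans (hwS f hfS)⟩

variable [DecidableEq V₁] [DecidableEq V₂]

noncomputable def heavierEdges (E : Finset (V₁ × V₂)) (w : V₁ × V₂ → ℝ) (estar : V₁ × V₂) :
    Finset (V₁ × V₂) :=
  (E.filter fun e => w estar ≤ w e).erase estar

theorem le_of_mem_heavierEdges {e : V₁ × V₂} (he : e ∈ heavierEdges E w estar) :
    w estar ≤ w e :=
  (Finset.mem_filter.1 (Finset.mem_of_mem_erase he)).2

theorem IsBottleneck.isExclusive_heavierEdges (hM : IsBottleneck w E M) (hestar : estar ∈ M) :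
    IsExclusive E estar (heavierEdges E w estar) := by
  refine ⟨(Finset.erase_subset _ _).trans (Finset.filter_subset _ _),
    Finset.notMem_erase _ _, fun M' hM' => ?_⟩
  obtain ⟨e, heM', hle⟩ := hM.2 M' hM' estar hestar
  by_cases h : e = estar
  · exact Or.inl (h ▸ heM')
  · exact Or.inr ⟨e, Finset.mem_erase.2 ⟨h, Finset.mem_filter.2 ⟨hM'.1 heM', hle⟩⟩, heM'⟩

end

theorem stmt0_general {V₁ V₂ : Type*}
    (E : Finset (V₁ × V₂)) (w : V₁ × V₂ → ℝ)
    (estar : V₁ × V₂) :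
    ((∃ M, IsAssignment E M ∧ IsMaxEdge w M estar ∧
        ∃ S, IsExclusive E estar S ∧ ∀ e ∈ S, w estar ≤ w e) ↔
      IsBottleneckEdge w E estar) ∧
    (∀ M S, IsAssignment E M → IsMaxEdge w M estar →
      IsExclusive E estar S → (∀ e ∈ S, w estar ≤ w e) →
      IsBottleneck w E M) := by
  classical
  refine ⟨⟨?_, ?_⟩, fun M S hM hmax hS hwS => hS.isBottleneck hwS hM hmax⟩
  · rintro ⟨M, hM, hmax, S, hS, hwS⟩
    exact ⟨M, hS.isBottleneck hwS hM hmax, hmax⟩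
  · rintro ⟨M, hM, hmax⟩
    exact ⟨M, hM.1, hmax, heavierEdges E w estar,
      hM.isExclusive_heavierEdges hmax.1, fun _ => le_of_mem_heavierEdges⟩

theorem stmt0 {V₁ V₂ : Type*} [Fintype V₁] [Fintype V₂] [Nonempty V₁] [Nonempty V₂]
    (hcard : Fintype.card V₂ ≤ Fintype.card V₁)
    (E : Finset (V₁ × V₂)) (w : V₁ × V₂ → ℝ)
    (hex : ∃ M, IsAssignment E M)
    (estar : V₁ × V₂) (he : estar ∈ E) :
    ((∃ M, IsAssignment E M ∧ IsMaxEdge w M estar ∧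
        ∃ S, IsExclusive E estar S ∧ ∀ e ∈ S, w estar ≤ w e) ↔
      IsBottleneckEdge w E estar) ∧
    (∀ M S, IsAssignment E M → IsMaxEdge w M estar →
      IsExclusive E estar S → (∀ e ∈ S, w estar ≤ w e) →
      IsBottleneck w E M) :=
  stmt0_general E w estar
end

section
/- If e* ∈ E is a bottleneck edge, then the set S := {e ∈ E : e ≠ e* and w_e ≥ w_{e*}} is an exclusive set for e*, and there exists an assignment Π containing e* with w_{e*} = max_{e∈Π} w_e. -/
theorem isExclusive_filter_weight_ge {V₁ V₂ : Type*} [DecidableEq V₁] [DecidableEq V₂]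
    {E : Finset (V₁ × V₂)} {w : V₁ × V₂ → ℝ} {estar : V₁ × V₂}
    (h : ∀ M, IsAssignment E M → ∃ e ∈ M, w estar ≤ w e) :
    IsExclusive E estar (E.filter (fun e => e ≠ estar ∧ w estar ≤ w e)) := by
  refine ⟨Finset.filter_subset _ _, by simp, fun M hM => ?_⟩
  obtain ⟨e, heM, hle⟩ := h M hM
  by_cases hes : e = estar
  · exact .inl (hes ▸ heM)
  · exact .inr ⟨e, Finset.mem_filter.mpr ⟨hM.1 heM, hes, hle⟩, heM⟩

theorem stmt1_general {V₁ V₂ : Type*}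
    [DecidableEq V₁] [DecidableEq V₂]
    (E : Finset (V₁ × V₂)) (w : V₁ × V₂ → ℝ)
    (estar : V₁ × V₂)
    (hbn : IsBottleneckEdge w E estar) :
    IsExclusive E estar (E.filter (fun e => e ≠ estar ∧ w estar ≤ w e)) ∧
    ∃ M, IsAssignment E M ∧ IsMaxEdge w M estar := by
  obtain ⟨M, ⟨hM, hMmin⟩, hmax⟩ := hbn
  exact ⟨isExclusive_filter_weight_ge fun M' hM' => hMmin M' hM' estar hmax.1, M, hM, hmax⟩

theorem stmt1 {V₁ V₂ : Type*} [Fintype V₁] [Fintype V₂] [Nonempty V₁] [Nonempty V₂]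
    [DecidableEq V₁] [DecidableEq V₂]
    (hcard : Fintype.card V₂ ≤ Fintype.card V₁)
    (E : Finset (V₁ × V₂)) (w : V₁ × V₂ → ℝ)
    (hex : ∃ M, IsAssignment E M)
    (estar : V₁ × V₂) (he : estar ∈ E)
    (hbn : IsBottleneckEdge w E estar) :
    IsExclusive E estar (E.filter (fun e => e ≠ estar ∧ w estar ≤ w e)) ∧
    ∃ M, IsAssignment E M ∧ IsMaxEdge w M estar :=
  stmt1_general E w estar hbn
end

section
/- Let e* ∈ E, let Π be an assignment containing e* with w_{e*} = max_{e∈Π} w_e, and let S be an exclusive set for e* with w_{e*} ≤ w_e for every e ∈ S. Then Π is a bottleneck assignment and e* is a bottleneck edge. -/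
theorem IsAssignment.isBottleneck_of_isExclusive {V₁ V₂ : Type*} {w : V₁ × V₂ → ℝ}
    {E M S : Finset (V₁ × V₂)} {estar : V₁ × V₂} (hM : IsAssignment E M)
    (hmax : IsMaxEdge w M estar) (hS : IsExclusive E estar S)
    (hle : ∀ e ∈ S, w estar ≤ w e) : IsBottleneck w E M := by
  refine ⟨hM, fun M' hM' e he => ?_⟩
  have hwe : w e ≤ w estar := hmax.2 e he
  obtain hestar | ⟨e', he'S, he'M'⟩ := hS.2.2 M' hM'
  · exact ⟨estar, hestar, hwe⟩
  · exact ⟨e', he'M', hwe.trans (hle e' he'S)⟩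

theorem stmt2_general {V₁ V₂ : Type*}
    (E : Finset (V₁ × V₂)) (w : V₁ × V₂ → ℝ)
    (estar : V₁ × V₂)
    (M : Finset (V₁ × V₂)) (hM : IsAssignment E M)
    (hmax : IsMaxEdge w M estar)
    (S : Finset (V₁ × V₂)) (hS : IsExclusive E estar S)
    (hle : ∀ e ∈ S, w estar ≤ w e) :
    IsBottleneck w E M ∧ IsBottleneckEdge w E estar :=
  have hbot := hM.isBottleneck_of_isExclusive hmax hS hle
  ⟨hbot, M, hbot, hmax⟩

theorem stmt2 {V₁ V₂ : Type*} [Fintype V₁] [Fintype V₂] [Nonempty V₁] [Nonempty V₂]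
    (hcard : Fintype.card V₂ ≤ Fintype.card V₁)
    (E : Finset (V₁ × V₂)) (w : V₁ × V₂ → ℝ)
    (hex : ∃ M, IsAssignment E M)
    (estar : V₁ × V₂) (he : estar ∈ E)
    (M : Finset (V₁ × V₂)) (hM : IsAssignment E M)
    (hmax : IsMaxEdge w M estar)
    (S : Finset (V₁ × V₂)) (hS : IsExclusive E estar S)
    (hle : ∀ e ∈ S, w estar ≤ w e) :
    IsBottleneck w E M ∧ IsBottleneckEdge w E estar :=
  stmt2_general E w estar M hM hmax S hS hle
end

section
/- Let e* ∈ E be a bottleneck edge of w and let λ̲, λ̄ : E → ℝ with λ̲_e ≥ 0 and λ̄_e ≥ 0 for every e ∈ E. Then the following are equivalent: (i) for every perturbation P with −λ̲_e ≤ P(e) ≤ λ̄_e for all e ∈ E, the edge e* is a bottleneck edge of the perturbed weights w + P; (ii) there exist an assignment Π containing e* and an exclusive set S for e* such that w_{e*} − λ̲_{e*} ≥ w_e + λ̄_e for every e ∈ Π \ {e*} and w_{e*} + λ̄_{e*} ≤ w_e − λ̲_e for every e ∈ S. -/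
/-!
Both directions compare `e*` with the edges of one assignment and of one exclusive set.
If `e*` is a maximum edge of an assignment `Π` and is no heavier than every edge of an
exclusive set `S`, then `Π` is a bottleneck assignment: any other assignment either contains
`e*` or an edge of `S`. Conversely, `e*` stays a bottleneck edge under the two extreme
perturbations that push `e*` to one end of its interval and every other edge to the opposite
end; the bottleneck assignment for the first one is `Π`, and the edges at least as heavy as
`e*` under the second one form `S`.
-/

section Bottleneck

variable {V₁ V₂ : Type*} {w : V₁ × V₂ → ℝ} {E M S : Finset (V₁ × V₂)} {estar : V₁ × V₂}

theorem isBottleneckEdge_of_isExclusive (hM : IsAssignment E M) (hmax : IsMaxEdge w M estar)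
    (hS : IsExclusive E estar S) (hSw : ∀ e ∈ S, w estar ≤ w e) :
    IsBottleneckEdge w E estar := by
  refine ⟨M, ⟨hM, fun M' hM' e he => ?_⟩, hmax⟩
  rcases hS.2.2 M' hM' with hstar | ⟨e', he'S, he'M'⟩
  · exact ⟨estar, hstar, hmax.2 e he⟩
  · exact ⟨e', he'M', (hmax.2 e he).trans (hSw e' he'S)⟩

theorem IsBottleneck.isExclusive_filter [DecidableEq (V₁ × V₂)] (hM : IsBottleneck w E M)
    (hstar : estar ∈ M) :
    IsExclusive E estar (E.filter fun e => e ≠ estar ∧ w estar ≤ w e) := by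
  refine ⟨Finset.filter_subset _ _, fun h => (Finset.mem_filter.mp h).2.1 rfl,
    fun M' hM' => or_iff_not_imp_left.mpr fun hM'star => ?_⟩
  obtain ⟨e, heM', hle⟩ := hM.2 M' hM' estar hstar
  have hne : e ≠ estar := fun h => hM'star (h ▸ heM')
  exact ⟨e, Finset.mem_filter.mpr ⟨hM'.1 heM', hne, hle⟩, heM'⟩

end Bottleneck

theorem update_mem_Icc {α : Type*} [DecidableEq α] {E : Finset α} {lo hi P : α → ℝ}
    (hP : ∀ e ∈ E, P e ∈ Set.Icc (-lo e) (hi e)) (a : α) {c : ℝ}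
    (hc : c ∈ Set.Icc (-lo a) (hi a)) :
    ∀ e ∈ E, Function.update P a c e ∈ Set.Icc (-lo e) (hi e) := by
  intro e he
  rcases eq_or_ne e a with rfl | hne
  · simpa using hc
  · simpa [hne] using hP e he

theorem stmt4_general {V₁ V₂ : Type*}
    (E : Finset (V₁ × V₂)) (w : V₁ × V₂ → ℝ)
    (estar : V₁ × V₂) (he : estar ∈ E)
    (lo hi : V₁ × V₂ → ℝ)
    (hlo : ∀ e ∈ E, 0 ≤ lo e) (hhi : ∀ e ∈ E, 0 ≤ hi e) :
    (∀ P : V₁ × V₂ → ℝ, (∀ e ∈ E, -lo e ≤ P e ∧ P e ≤ hi e) →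
        IsBottleneckEdge (fun e => w e + P e) E estar) ↔
    (∃ M S, IsAssignment E M ∧ estar ∈ M ∧ IsExclusive E estar S ∧
        (∀ e ∈ M, e ≠ estar → w e + hi e ≤ w estar - lo estar) ∧
        (∀ e ∈ S, w estar + hi estar ≤ w e - lo e)) := by
  classical
  have hlo_mem : ∀ e ∈ E, -lo e ∈ Set.Icc (-lo e) (hi e) := fun e he =>
    ⟨le_rfl, by linarith [hlo e he, hhi e he]⟩
  have hhi_mem : ∀ e ∈ E, hi e ∈ Set.Icc (-lo e) (hi e) := fun e he =>
    ⟨by linarith [hlo e he, hhi e he], le_rfl⟩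
  constructor
  · intro h
    obtain ⟨M, hM, hstar, hmax⟩ :=
      h _ (update_mem_Icc hhi_mem estar (hlo_mem estar he))
    obtain ⟨M₁, hM₁, hstar₁, -⟩ :=
      h _ (update_mem_Icc (P := fun e => -lo e) hlo_mem estar (hhi_mem estar he))
    refine ⟨M, _, hM.1, hstar, hM₁.isExclusive_filter hstar₁, fun e he hne => ?_, fun e he => ?_⟩
    · simpa [hne, sub_eq_add_neg] using hmax e he
    · obtain ⟨-, hne, hle⟩ := Finset.mem_filter.mp he
      simpa [hne, sub_eq_add_neg] using hle
  · rintro ⟨M, S, hM, hstar, hS, hMw, hSw⟩ P hP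
    have hPstar := hP estar (hM.1 hstar)
    refine isBottleneckEdge_of_isExclusive hM ⟨hstar, fun e heM => ?_⟩ hS fun e heS => ?_
    · rcases eq_or_ne e estar with rfl | hne
      · exact le_rfl
      · linarith [hP e (hM.1 heM), hMw e heM hne]
    · linarith [hP e (hS.1 heS), hSw e heS]

theorem stmt4 {V₁ V₂ : Type*} [Fintype V₁] [Fintype V₂] [Nonempty V₁] [Nonempty V₂]
    (hcard : Fintype.card V₂ ≤ Fintype.card V₁)
    (E : Finset (V₁ × V₂)) (w : V₁ × V₂ → ℝ)
    (hex : ∃ M, IsAssignment E M)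
    (estar : V₁ × V₂) (he : estar ∈ E)
    (hbn : IsBottleneckEdge w E estar)
    (lo hi : V₁ × V₂ → ℝ)
    (hlo : ∀ e ∈ E, 0 ≤ lo e) (hhi : ∀ e ∈ E, 0 ≤ hi e) :
    (∀ P : V₁ × V₂ → ℝ, (∀ e ∈ E, -lo e ≤ P e ∧ P e ≤ hi e) →
        IsBottleneckEdge (fun e => w e + P e) E estar) ↔
    (∃ M S, IsAssignment E M ∧ estar ∈ M ∧ IsExclusive E estar S ∧
        (∀ e ∈ M, e ≠ estar → w e + hi e ≤ w estar - lo estar) ∧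
        (∀ e ∈ S, w estar + hi estar ≤ w e - lo e)) :=
  stmt4_general E w estar he lo hi hlo hhi
end

section
/- Let Π be an assignment and let λ̲, λ̄ : E → ℝ with λ̲_e ≥ 0 and λ̄_e ≥ 0 for every e ∈ E. Then the following are equivalent: (i) for every perturbation P with −λ̲_e ≤ P(e) ≤ λ̄_e for all e ∈ E, the assignment Π is a bottleneck assignment of the perturbed weights w + P; (ii) for every e ∈ Π there exists an exclusive set S_e for e such that w_e + λ̄_e ≤ w_{e'} − λ̲_{e'} for every e' ∈ S_e. -/
/-!
(ii) ⇒ (i): an admissible perturbation keeps every edge of `S_e` at least as heavy as `e`, and a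
competing assignment either contains `e` or meets `S_e`, so it cannot beat `M`.
(i) ⇒ (ii): apply (i) to the perturbation raising `e` to `w e + hi e` and lowering every other
edge `e'` to `w e' - lo e'`; a competing assignment avoiding `e` must then contain an edge at
least that heavy, so those edges form an exclusive set for `e`.
-/

section Bottleneck

variable {V₁ V₂ : Type*} {E M : Finset (V₁ × V₂)} {v : V₁ × V₂ → ℝ}

theorem isBottleneck_of_forall_isExclusive (hM : IsAssignment E M)
    (h : ∀ e ∈ M, ∃ S, IsExclusive E e S ∧ ∀ e' ∈ S, v e ≤ v e') :
    IsBottleneck v E M := by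
  refine ⟨hM, fun M' hM' e he => ?_⟩
  obtain ⟨S, ⟨-, -, hS⟩, hle⟩ := h e he
  rcases hS M' hM' with heM' | ⟨e', he'S, he'M'⟩
  · exact ⟨e, heM', le_rfl⟩
  · exact ⟨e', he'M', hle e' he'S⟩

open Classical in
theorem IsBottleneck.isExclusive_filter_s5 (hB : IsBottleneck v E M) {e : V₁ × V₂} (he : e ∈ M) :
    IsExclusive E e {e' ∈ E | e' ≠ e ∧ v e ≤ v e'} := by
  refine ⟨Finset.filter_subset _ _, by simp, fun M' hM' => or_iff_not_imp_left.2 fun heM' => ?_⟩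
  obtain ⟨e', he'M', hle⟩ := hB.2 M' hM' e he
  have hne : e' ≠ e := by rintro rfl; exact heM' he'M'
  exact ⟨e', Finset.mem_filter.2 ⟨hM'.1 he'M', hne, hle⟩, he'M'⟩

end Bottleneck

theorem stmt5_general {V₁ V₂ : Type*}
    (E : Finset (V₁ × V₂)) (w : V₁ × V₂ → ℝ)
    (M : Finset (V₁ × V₂)) (hM : IsAssignment E M)
    (lo hi : V₁ × V₂ → ℝ)
    (hlo : ∀ e ∈ E, 0 ≤ lo e) (hhi : ∀ e ∈ E, 0 ≤ hi e) :
    (∀ P : V₁ × V₂ → ℝ, (∀ e ∈ E, -lo e ≤ P e ∧ P e ≤ hi e) →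
        IsBottleneck (fun e => w e + P e) E M) ↔
    (∀ e ∈ M, ∃ S, IsExclusive E e S ∧
        ∀ e' ∈ S, w e + hi e ≤ w e' - lo e') := by
  classical
  constructor
  · intro h e he
    have hP : ∀ e' ∈ E, -lo e' ≤ Function.update (-lo) e (hi e) e' ∧
        Function.update (-lo) e (hi e) e' ≤ hi e' := by
      intro e' he'
      have := hlo e' he'
      have := hhi e' he'
      rcases eq_or_ne e' e with rfl | hne
      · simp only [Function.update_self]; constructor <;> linarith
      · simp only [Function.update_of_ne hne, Pi.neg_apply]; constructor <;> linarith
    refine ⟨_, (h _ hP).isExclusive_filter_s5 he, fun e' he' => ?_⟩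
    obtain ⟨-, hne, hle⟩ := Finset.mem_filter.1 he'
    simpa [Function.update_of_ne hne, sub_eq_add_neg] using hle
  · intro h P hP
    refine isBottleneck_of_forall_isExclusive hM fun e he => ?_
    obtain ⟨S, hS, hle⟩ := h e he
    refine ⟨S, hS, fun e' he' => ?_⟩
    linarith [hle e' he', (hP e (hM.1 he)).2, (hP e' (hS.1 he')).1]

theorem stmt5 {V₁ V₂ : Type*} [Fintype V₁] [Fintype V₂] [Nonempty V₁] [Nonempty V₂]
    (hcard : Fintype.card V₂ ≤ Fintype.card V₁)
    (E : Finset (V₁ × V₂)) (w : V₁ × V₂ → ℝ)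
    (hex : ∃ M, IsAssignment E M)
    (M : Finset (V₁ × V₂)) (hM : IsAssignment E M)
    (lo hi : V₁ × V₂ → ℝ)
    (hlo : ∀ e ∈ E, 0 ≤ lo e) (hhi : ∀ e ∈ E, 0 ≤ hi e) :
    (∀ P : V₁ × V₂ → ℝ, (∀ e ∈ E, -lo e ≤ P e ∧ P e ≤ hi e) →
        IsBottleneck (fun e => w e + P e) E M) ↔
    (∀ e ∈ M, ∃ S, IsExclusive E e S ∧
        ∀ e' ∈ S, w e + hi e ≤ w e' - lo e') :=
  stmt5_general E w M hM lo hi hlo hhi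
end

section
/- Let e* ∈ E, let Π be an assignment containing e* with w_{e*} = max_{e∈Π} w_e and Π \ {e*} nonempty, and let S be a nonempty exclusive set for e* with w_{e*} ≤ w_e for every e ∈ S. Define λ̄* := min_{e∈S} (w_e − w_{e*})/2 and λ̲* := min_{e∈Π\{e*}} (w_{e*} − w_e)/2. Then for every perturbation P : E → ℝ satisfying −λ̲* ≤ P(e*) ≤ λ̄*, P(e) ≥ w_{e*} + λ̄* − w_e for every e ∈ S, and P(e) ≤ w_{e*} − λ̲* − w_e for every e ∈ Π \ {e*} (with P unrestricted on all other edges), the edge e* is a bottleneck edge of the perturbed weights w + P and Π is a bottleneck assignment of w + P. -/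
/-!
Exclusivity forces every assignment to contain `e*` or an edge of `S`. The perturbation
lifts every edge of `S` to at least `w e* + λ̄*`, which bounds the perturbed weight of `e*`,
and lowers every other edge of `Π` to at most `w e* - λ̲*`, which the perturbed weight of
`e*` still exceeds. So `e*` stays a heaviest edge of `Π`, and every assignment has an edge
at least as heavy.
-/

theorem IsBottleneck.of_isMaxEdge {V₁ V₂ : Type*} {w : V₁ × V₂ → ℝ} {E M : Finset (V₁ × V₂)}
    {e : V₁ × V₂} (hM : IsAssignment E M) (hmax : IsMaxEdge w M e)
    (hlower : ∀ M', IsAssignment E M' → ∃ e' ∈ M', w e ≤ w e') :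
    IsBottleneck w E M := by
  refine ⟨hM, fun M' hM' f hf => ?_⟩
  obtain ⟨e', he', hle⟩ := hlower M' hM'
  exact ⟨e', he', (hmax.2 f hf).trans hle⟩

theorem IsExclusive.exists_le {V₁ V₂ : Type*} {w : V₁ × V₂ → ℝ} {E S M : Finset (V₁ × V₂)}
    {e : V₁ × V₂} (hS : IsExclusive E e S) (hle : ∀ e' ∈ S, w e ≤ w e')
    (hM : IsAssignment E M) : ∃ e' ∈ M, w e ≤ w e' := by
  rcases hS.2.2 M hM with he | ⟨e', heS, heM⟩
  · exact ⟨e, he, le_rfl⟩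
  · exact ⟨e', heM, hle e' heS⟩

theorem stmt6_general {V₁ V₂ : Type*}
    [DecidableEq V₁] [DecidableEq V₂]
    (E : Finset (V₁ × V₂)) (w : V₁ × V₂ → ℝ)
    (estar : V₁ × V₂)
    (M : Finset (V₁ × V₂)) (hM : IsAssignment E M)
    (hmax : IsMaxEdge w M estar) (hMne : (M.erase estar).Nonempty)
    (S : Finset (V₁ × V₂)) (hSne : S.Nonempty)
    (hS : IsExclusive E estar S) :
    ∀ P : V₁ × V₂ → ℝ,
      -((M.erase estar).inf' hMne (fun e => (w estar - w e) / 2)) ≤ P estar →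
      P estar ≤ S.inf' hSne (fun e => (w e - w estar) / 2) →
      (∀ e ∈ S, w estar + S.inf' hSne (fun e' => (w e' - w estar) / 2) - w e ≤ P e) →
      (∀ e ∈ M, e ≠ estar →
        P e ≤ w estar - (M.erase estar).inf' hMne (fun e' => (w estar - w e') / 2) - w e) →
      IsBottleneckEdge (fun e => w e + P e) E estar ∧
        IsBottleneck (fun e => w e + P e) E M := by
  intro P hP_estar_ge hP_estar_le hP_S hP_M
  have hmaxP : IsMaxEdge (fun e => w e + P e) M estar := by
    refine ⟨hmax.1, fun e he => ?_⟩
    rcases eq_or_ne e estar with rfl | hne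
    · exact le_rfl
    · linarith [hP_M e he hne]
  have hSP : ∀ e ∈ S, w estar + P estar ≤ w e + P e := fun e he => by linarith [hP_S e he]
  have hbot : IsBottleneck (fun e => w e + P e) E M :=
    .of_isMaxEdge hM hmaxP fun _ hM' => hS.exists_le (w := fun e => w e + P e) hSP hM'
  exact ⟨⟨M, hbot, hmaxP⟩, hbot⟩

theorem stmt6 {V₁ V₂ : Type*} [Fintype V₁] [Fintype V₂] [Nonempty V₁] [Nonempty V₂]
    [DecidableEq V₁] [DecidableEq V₂]
    (hcard : Fintype.card V₂ ≤ Fintype.card V₁)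
    (E : Finset (V₁ × V₂)) (w : V₁ × V₂ → ℝ)
    (hex : ∃ M, IsAssignment E M)
    (estar : V₁ × V₂) (he : estar ∈ E)
    (M : Finset (V₁ × V₂)) (hM : IsAssignment E M)
    (hmax : IsMaxEdge w M estar) (hMne : (M.erase estar).Nonempty)
    (S : Finset (V₁ × V₂)) (hSne : S.Nonempty)
    (hS : IsExclusive E estar S) (hle : ∀ e ∈ S, w estar ≤ w e) :
    ∀ P : V₁ × V₂ → ℝ,
      -((M.erase estar).inf' hMne (fun e => (w estar - w e) / 2)) ≤ P estar →
      P estar ≤ S.inf' hSne (fun e => (w e - w estar) / 2) →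
      (∀ e ∈ S, w estar + S.inf' hSne (fun e' => (w e' - w estar) / 2) - w e ≤ P e) →
      (∀ e ∈ M, e ≠ estar →
        P e ≤ w estar - (M.erase estar).inf' hMne (fun e' => (w estar - w e') / 2) - w e) →
      IsBottleneckEdge (fun e => w e + P e) E estar ∧
        IsBottleneck (fun e => w e + P e) E M :=
  stmt6_general E w estar M hM hmax hMne S hSne hS
end

section
/- Let e* ∈ E, let Π be an assignment containing e* with Π \ {e*} nonempty, and let S be a nonempty exclusive set for e*. Suppose λ̲, λ̄ : E → ℝ are nonnegative bounds satisfying w_{e*} + λ̄_{e*} ≤ w_e − λ̲_e for every e ∈ S and w_{e*} − λ̲_{e*} ≥ w_e + λ̄_e for every e ∈ Π \ {e*}. Then min(λ̄_{e*}, min_{e∈S} λ̲_e) ≤ min_{e∈S} (w_e − w_{e*})/2 and min(λ̲_{e*}, min_{e∈Π\{e*}} λ̄_e) ≤ min_{e∈Π\{e*}} (w_{e*} − w_e)/2. -/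
section HalfGap

variable {α ι : Type*} [Field α] [LinearOrder α] [IsStrictOrderedRing α]

theorem min_le_half_sub_of_add_le_sub {a b c d : α} (h : a + b ≤ c - d) :
    min b d ≤ (c - a) / 2 := by
  linarith [min_le_left b d, min_le_right b d]

theorem Finset.min_inf'_le_inf'_half_sub_left {s : Finset ι} (hs : s.Nonempty) {x y : α}
    {f g : ι → α} (h : ∀ i ∈ s, x + y ≤ f i - g i) :
    min y (s.inf' hs g) ≤ s.inf' hs (fun i => (f i - x) / 2) :=
  Finset.le_inf' hs _ fun i hi =>
    (min_le_min_left y (s.inf'_le g hi)).trans (min_le_half_sub_of_add_le_sub (h i hi))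

theorem Finset.min_inf'_le_inf'_half_sub_right {s : Finset ι} (hs : s.Nonempty) {x y : α}
    {f g : ι → α} (h : ∀ i ∈ s, f i + g i ≤ x - y) :
    min y (s.inf' hs g) ≤ s.inf' hs (fun i => (x - f i) / 2) :=
  Finset.le_inf' hs _ fun i hi => by
    rw [min_comm]
    exact (min_le_min_right y (s.inf'_le g hi)).trans (min_le_half_sub_of_add_le_sub (h i hi))

end HalfGap

theorem stmt7_general {V₁ V₂ : Type*}
    [DecidableEq V₁] [DecidableEq V₂]
    (w : V₁ × V₂ → ℝ)
    (estar : V₁ × V₂)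
    (M : Finset (V₁ × V₂))
    (hMne : (M.erase estar).Nonempty)
    (S : Finset (V₁ × V₂)) (hSne : S.Nonempty)
    (lo hi : V₁ × V₂ → ℝ)
    (hSbnd : ∀ e ∈ S, w estar + hi estar ≤ w e - lo e)
    (hMbnd : ∀ e ∈ M, e ≠ estar → w e + hi e ≤ w estar - lo estar) :
    min (hi estar) (S.inf' hSne lo) ≤ S.inf' hSne (fun e => (w e - w estar) / 2) ∧
    min (lo estar) ((M.erase estar).inf' hMne hi) ≤
      (M.erase estar).inf' hMne (fun e => (w estar - w e) / 2) :=
  ⟨Finset.min_inf'_le_inf'_half_sub_left hSne hSbnd,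
    Finset.min_inf'_le_inf'_half_sub_right hMne fun e he =>
      hMbnd e (Finset.mem_of_mem_erase he) (Finset.ne_of_mem_erase he)⟩

theorem stmt7 {V₁ V₂ : Type*} [Fintype V₁] [Fintype V₂] [Nonempty V₁] [Nonempty V₂]
    [DecidableEq V₁] [DecidableEq V₂]
    (hcard : Fintype.card V₂ ≤ Fintype.card V₁)
    (E : Finset (V₁ × V₂)) (w : V₁ × V₂ → ℝ)
    (hex : ∃ M, IsAssignment E M)
    (estar : V₁ × V₂) (he : estar ∈ E)
    (M : Finset (V₁ × V₂)) (hM : IsAssignment E M) (heM : estar ∈ M)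
    (hMne : (M.erase estar).Nonempty)
    (S : Finset (V₁ × V₂)) (hSne : S.Nonempty) (hS : IsExclusive E estar S)
    (lo hi : V₁ × V₂ → ℝ)
    (hlo : ∀ e ∈ E, 0 ≤ lo e) (hhi : ∀ e ∈ E, 0 ≤ hi e)
    (hSbnd : ∀ e ∈ S, w estar + hi estar ≤ w e - lo e)
    (hMbnd : ∀ e ∈ M, e ≠ estar → w e + hi e ≤ w estar - lo estar) :
    min (hi estar) (S.inf' hSne lo) ≤ S.inf' hSne (fun e => (w e - w estar) / 2) ∧
    min (lo estar) ((M.erase estar).inf' hMne hi) ≤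
      (M.erase estar).inf' hMne (fun e => (w estar - w e) / 2) :=
  stmt7_general w estar M hMne S hSne lo hi hSbnd hMbnd
end
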